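/- Let P and P̄ be as above, and let k ≥ 1. If F ∈ L²(π) is an eigenfunction of (P*)^k P^k with eigenvalue λ, then the function f(u,y) := F(u) is an eigenfunction of (P̄*)^k P̄^k with the same eigenvalue λ. -/

import Mathlib

/-!
The first coordinate intertwines `P̄` with `P` and `P̄*` with `P*`: since every `Q u'` is a
probability measure, the `U`-marginal of `P̄((u, y), ·)` is `P(u, ·)`. Intertwining passes to
powers and compositions of kernels, so the `U`-marginal of `((P̄*)^k P̄^k)((u, y), ·)` is
`((P*)^k P^k)(u, ·)`, and integrating `F ∘ Prod.fst` against the former is integrating `F`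
against the latter.
-/

open MeasureTheory

/-- Composition of two transition kernels. -/
noncomputable def kcomp {α : Type*} [MeasurableSpace α]
    (κ η : α → Measure α) : α → Measure α :=
  fun u => (κ u).bind η

/-- `k`-th power of a transition kernel. -/
noncomputable def kpow {α : Type*} [MeasurableSpace α]
    (κ : α → Measure α) : ℕ → α → Measure α
  | 0 => fun u => Measure.dirac u
  | k + 1 => kcomp κ (kpow κ k)

open ProbabilityTheory

namespace MeasureTheory.Measure

variable {α β γ : Type*} [MeasurableSpace α] [MeasurableSpace β] [MeasurableSpace γ]

lemma map_bind (μ : Measure α) {f : α → Measure β} {g : β → γ}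
    (hf : Measurable f) (hg : Measurable g) :
    (μ.bind f).map g = μ.bind (fun a => (f a).map g) := by
  rw [bind, bind, ← join_map_map hg, map_map (measurable_map g hg) hf]
  rfl

lemma bind_map (μ : Measure α) {g : α → β} {f : β → Measure γ}
    (hg : Measurable g) (hf : Measurable f) :
    (μ.map g).bind f = μ.bind (f ∘ g) := by
  rw [bind, bind, map_map hf hg]

end MeasureTheory.Measure

section Intertwining

variable {α β : Type*} [MeasurableSpace α] [MeasurableSpace β]

lemma measurable_kpow {κ : α → Measure α} (hκ : Measurable κ) (k : ℕ) :
    Measurable (kpow κ k) := by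
  induction k with
  | zero => exact Measure.measurable_dirac
  | succ k ih => exact (Measure.measurable_bind' ih).comp hκ

variable {φ : α → β} {L L' : α → Measure α} {κ κ' : β → Measure β}

lemma map_kcomp_of_map_eq (hφ : Measurable φ) (hL' : Measurable L') (hκ' : Measurable κ')
    (h : ∀ a, (L a).map φ = κ (φ a)) (h' : ∀ a, (L' a).map φ = κ' (φ a)) (a : α) :
    (kcomp L L' a).map φ = kcomp κ κ' (φ a) := by
  calc ((L a).bind L').map φ
      = (L a).bind (κ' ∘ φ) := by
        rw [Measure.map_bind _ hL' hφ]
        exact congrArg _ (funext h')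
    _ = (κ (φ a)).bind κ' := by rw [← h, Measure.bind_map _ hφ hκ']

lemma map_kpow_of_map_eq (hφ : Measurable φ) (hL : Measurable L) (hκ : Measurable κ)
    (h : ∀ a, (L a).map φ = κ (φ a)) (k : ℕ) (a : α) :
    (kpow L k a).map φ = kpow κ k (φ a) := by
  induction k generalizing a with
  | zero => exact Measure.map_dirac' hφ a
  | succ k ih =>
    exact map_kcomp_of_map_eq hφ (measurable_kpow hL k) (measurable_kpow hκ k) h ih a

end Intertwining

section ProductKernel

variable {U Y : Type*} [MeasurableSpace U] [MeasurableSpace Y]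

/-- The kernel `P̄((u, y), d(u', y')) = κ(u, du') Q(u', dy')` on `U × Y`. -/
noncomputable def prodKernel (κ : U → Measure U) (Q : U → Measure Y) :
    U × Y → Measure (U × Y) :=
  fun p => (κ p.1).bind (fun u' => (Q u').map (fun y' => (u', y')))

variable {Q : U → Measure Y}

lemma measurable_map_prodMk (hQm : Measurable Q) (hQ : ∀ u, IsProbabilityMeasure (Q u)) :
    Measurable (fun u : U => (Q u).map (Prod.mk u)) := by
  let κQ : Kernel U Y := ⟨Q, hQm⟩
  have : IsMarkovKernel κQ := ⟨hQ⟩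
  convert (Kernel.deterministic id measurable_id ×ₖ κQ).measurable using 1
  ext1 u
  rw [Kernel.prod_apply, Kernel.deterministic_apply, id, Measure.dirac_prod]
  rfl

variable {κ : U → Measure U}

lemma measurable_prodKernel (hκ : Measurable κ) (hQm : Measurable Q)
    (hQ : ∀ u, IsProbabilityMeasure (Q u)) : Measurable (prodKernel κ Q) :=
  (Measure.measurable_bind' (measurable_map_prodMk hQm hQ)).comp (hκ.comp measurable_fst)

lemma map_fst_prodKernel (hQm : Measurable Q) (hQ : ∀ u, IsProbabilityMeasure (Q u))
    (p : U × Y) : (prodKernel κ Q p).map Prod.fst = κ p.1 := by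
  rw [prodKernel, Measure.map_bind _ (measurable_map_prodMk hQm hQ) measurable_fst]
  conv_rhs => rw [← Measure.bind_dirac (m := κ p.1)]
  congr 1
  funext u'
  rw [Measure.map_map measurable_fst measurable_prodMk_left]
  simp [Function.comp_def, Measure.map_const, (hQ u').measure_univ]

lemma map_fst_kpow_prodKernel (hκ : Measurable κ) (hQm : Measurable Q)
    (hQ : ∀ u, IsProbabilityMeasure (Q u)) (k : ℕ) (p : U × Y) :
    (kpow (prodKernel κ Q) k p).map Prod.fst = kpow κ k p.1 :=
  map_kpow_of_map_eq measurable_fst (measurable_prodKernel hκ hQm hQ) hκ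
    (map_fst_prodKernel hQm hQ) k p

end ProductKernel

theorem lift_eigenfunction_to_product_general
    {U Y : Type*} [MeasurableSpace U] [MeasurableSpace Y]
    (P Pstar : U → Measure U) (Q : U → Measure Y)
    (hQ : ∀ u, IsProbabilityMeasure (Q u))
    (hPm : Measurable P) (hPstarm : Measurable Pstar) (hQm : Measurable Q)
    (Pbar Pbarstar : U × Y → Measure (U × Y))
    (hPbar : Pbar = fun p => (P p.1).bind (fun u' => (Q u').map (fun y' => (u', y'))))
    (hPbarstar : Pbarstar =
      fun p => (Pstar p.1).bind (fun u' => (Q u').map (fun y' => (u', y'))))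
    (k : ℕ) (lam : ℝ)
    (F : U → ℝ) (hFm : Measurable F)
    (heig : ∀ u, ∫ v, F v ∂(kcomp (kpow Pstar k) (kpow P k) u) = lam * F u) :
    ∀ u : U, ∀ y : Y,
      ∫ p, F p.1 ∂(kcomp (kpow Pbarstar k) (kpow Pbar k) (u, y)) = lam * F u := by
  change Pbar = prodKernel P Q at hPbar
  change Pbarstar = prodKernel Pstar Q at hPbarstar
  subst hPbar hPbarstar
  intro u y
  have hmarg := map_kcomp_of_map_eq measurable_fst
    (measurable_kpow (measurable_prodKernel hPm hQm hQ) k) (measurable_kpow hPm k)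
    (map_fst_kpow_prodKernel hPstarm hQm hQ k) (map_fst_kpow_prodKernel hPm hQm hQ k) (u, y)
  rw [← heig u, ← hmarg, integral_map measurable_fst.aemeasurable hFm.aestronglyMeasurable]

/-- if `F` is an eigenfunction of `(P*)^k P^k` with eigenvalue `λ`,
then `f(u,y) := F(u)` is an eigenfunction of `(P̄*)^k P̄^k` with eigenvalue `λ`. -/
theorem lift_eigenfunction_to_product
    {U Y : Type*} [MeasurableSpace U] [MeasurableSpace Y]
    (P Pstar : U → Measure U) (Q : U → Measure Y) (π : Measure U)
    [IsProbabilityMeasure π]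
    (hP : ∀ u, IsProbabilityMeasure (P u))
    (hPstar : ∀ u, IsProbabilityMeasure (Pstar u))
    (hQ : ∀ u, IsProbabilityMeasure (Q u))
    (hPm : Measurable P) (hPstarm : Measurable Pstar) (hQm : Measurable Q)
    (hstat : π.bind P = π)
    (Pbar Pbarstar : U × Y → Measure (U × Y))
    (hPbar : Pbar = fun p => (P p.1).bind (fun u' => (Q u').map (fun y' => (u', y'))))
    (hPbarstar : Pbarstar =
      fun p => (Pstar p.1).bind (fun u' => (Q u').map (fun y' => (u', y'))))
    (k : ℕ) (hk : 1 ≤ k) (lam : ℝ)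
    (F : U → ℝ) (hFm : Measurable F)
    (hFL2 : MemLp F 2 π)
    (heig : ∀ u, ∫ v, F v ∂(kcomp (kpow Pstar k) (kpow P k) u) = lam * F u) :
    ∀ u : U, ∀ y : Y,
      ∫ p, F p.1 ∂(kcomp (kpow Pbarstar k) (kpow Pbar k) (u, y)) = lam * F u :=
  lift_eigenfunction_to_product_general P Pstar Q hQ hPm hPstarm hQm Pbar Pbarstar hPbar hPbarstar k
    lam F hFm heig
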